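/- Consider an MDP satisfying the time-invariance, random exploration, and stationarity assumptions, and suppose geometric mixing holds with parameter t_0 for the state kernels of both the behavior and evaluation policies, and policy overlap holds with parameter C_η = exp(ζ_π), i.e., π_e(a|s) ≤ e^{ζ_π} π_b(a|s) for all s,a. Then long-run δ-weak distributional overlap holds with δ = 1/(ζ_π t_0): there exists a finite constant C such that P_{p_b}(ω(S)^{1 + 1/(ζ_π t_0)} ≥ x) ≤ C/x for all x > 0, where ω = d p_e/d p_b is the ratio of the stationary state distributions of the evaluation and behavior policies. -/

import Mathlib

/- Off-policy evaluation in Markov decision processes: common definitions.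

We model a time-invariant MDP by a measurable state space `𝒮`, a finite action set `𝒜`,
a Markov transition kernel `ps : 𝒮 → 𝒜 → Measure 𝒮` and a reward kernel
`pr : 𝒮 → 𝒜 → Measure ℝ`.  A policy is given by probability weights `π : 𝒮 → 𝒜 → ℝ`. -/

open MeasureTheory ProbabilityTheory Filter Topology
open scoped ENNReal NNReal

noncomputable section

variable {𝒮 : Type*} [MeasurableSpace 𝒮] {𝒜 : Type*} [Fintype 𝒜] [MeasurableSpace 𝒜]
  {Ω : Type*}

/-- Action distribution of a (weight-valued) policy `π` in state `s`. -/
def actDist (π : 𝒮 → 𝒜 → ℝ) (s : 𝒮) : Measure 𝒜 :=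
  ∑ a : 𝒜, ENNReal.ofReal (π s a) • Measure.dirac a

/-- One-step state transition kernel induced by a policy:
`P^π(· | s) = ∑ a π(a|s) p_s(· | s, a)`. -/
def stepS (ps : 𝒮 → 𝒜 → Measure 𝒮) (π : 𝒮 → 𝒜 → ℝ) (s : 𝒮) : Measure 𝒮 :=
  ∑ a : 𝒜, ENNReal.ofReal (π s a) • ps s a

/-- One-step state-action transition kernel induced by a policy. -/
def stepSA (ps : 𝒮 → 𝒜 → Measure 𝒮) (π : 𝒮 → 𝒜 → ℝ) (p : 𝒮 × 𝒜) : Measure (𝒮 × 𝒜) :=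
  (ps p.1 p.2).bind fun s' => (actDist π s').map fun a' => (s', a')

/-- `n`-step evolution of a distribution under a transition kernel. -/
def nstep {X : Type*} [MeasurableSpace X] (step : X → Measure X) (n : ℕ) (μ0 : Measure X) :
    Measure X :=
  (fun ν => ν.bind step)^[n] μ0

/-- Mean reward `r̄(s,a) = E[p_r(·|s,a)]`. -/
def rbar (pr : 𝒮 → 𝒜 → Measure ℝ) (p : 𝒮 × 𝒜) : ℝ := ∫ r, r ∂(pr p.1 p.2)

/-- Initial joint state-action distribution: `S ∼ p₀`, `A ∼ π(·|S)`. -/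
def initSA (π : 𝒮 → 𝒜 → ℝ) (p0 : Measure 𝒮) : Measure (𝒮 × 𝒜) :=
  p0.bind fun s => (actDist π s).map fun a => (s, a)

/-- Discounted `Q`-function `q_e^γ(s,a) = E_{π_e}[∑ γ^t R_t | S₀ = s, A₀ = a]`
(expressed via the `t`-step state-action distributions, using that the mean reward at time `t`
is the integral of `r̄` against the time-`t` state-action distribution). -/
def qGamma (ps : 𝒮 → 𝒜 → Measure 𝒮) (pr : 𝒮 → 𝒜 → Measure ℝ) (πe : 𝒮 → 𝒜 → ℝ) (γ : ℝ)
    (s : 𝒮) (a : 𝒜) : ℝ :=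
  ∑' t : ℕ, γ ^ t * ∫ p, rbar pr p ∂(nstep (stepSA ps πe) t (Measure.dirac (s, a)))

/-- Discounted value function `v_e^γ(s) = ∑ a π_e(a|s) q_e^γ(s,a)`. -/
def vGamma (ps : 𝒮 → 𝒜 → Measure 𝒮) (pr : 𝒮 → 𝒜 → Measure ℝ) (πe : 𝒮 → 𝒜 → ℝ) (γ : ℝ)
    (s : 𝒮) : ℝ :=
  ∑ a : 𝒜, πe s a * qGamma ps pr πe γ s a

/-- Discounted average reward `θ_γ(p₀) = (1-γ) E_{π_e}[∑ γ^t R_t | S₀ ∼ p₀]`. -/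
def thetaGammaVal (ps : 𝒮 → 𝒜 → Measure 𝒮) (pr : 𝒮 → 𝒜 → Measure ℝ) (πe : 𝒮 → 𝒜 → ℝ)
    (γ : ℝ) (p0 : Measure 𝒮) : ℝ :=
  (1 - γ) * ∑' t : ℕ, γ ^ t * ∫ p, rbar pr p ∂(nstep (stepSA ps πe) t (initSA πe p0))

/-- Discounted state occupancy `p_e^γ(·; p₀) = (1-γ) ∑ γ^t P_{π_e}(S_t ∈ · | S₀ ∼ p₀)`. -/
def peGamma (ps : 𝒮 → 𝒜 → Measure 𝒮) (πe : 𝒮 → 𝒜 → ℝ) (γ : ℝ) (p0 : Measure 𝒮) :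
    Measure 𝒮 :=
  ENNReal.ofReal (1 - γ) •
    Measure.sum fun t : ℕ => ENNReal.ofReal (γ ^ t) • nstep (stepS ps πe) t p0

/-- Law of a stationary behavior-policy triple `(S, A, S')`:
`S ∼ p_b`, `A ∼ π_b(·|S)`, `S' ∼ p_s(·|S,A)`. -/
def behTriple (ps : 𝒮 → 𝒜 → Measure 𝒮) (πb : 𝒮 → 𝒜 → ℝ) (pb : Measure 𝒮) :
    Measure (𝒮 × 𝒜 × 𝒮) :=
  pb.bind fun s => (actDist πb s).bind fun a => (ps s a).map fun s' => (s, a, s')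

/-- Law of a stationary behavior-policy tuple `(S, A, R, S')`. -/
def behTuple (ps : 𝒮 → 𝒜 → Measure 𝒮) (pr : 𝒮 → 𝒜 → Measure ℝ) (πb : 𝒮 → 𝒜 → ℝ)
    (pb : Measure 𝒮) : Measure (𝒮 × 𝒜 × ℝ × 𝒮) :=
  pb.bind fun s => (actDist πb s).bind fun a =>
    ((pr s a).prod (ps s a)).map fun rs => (s, a, rs.1, rs.2)

/-- Total-variation distance between two measures. -/
def tvDist {X : Type*} [MeasurableSpace X] (μ ν : Measure X) : ℝ :=
  ⨆ B : {B : Set X // MeasurableSet B}, |(μ B.1).toReal - (ν B.1).toReal|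

/-- σ-algebra generated by `f 0, …, f (n-1)`. -/
def sigmaUpTo {X : Type*} [MeasurableSpace X] (f : ℕ → Ω → X) (n : ℕ) : MeasurableSpace Ω :=
  ⨆ i ∈ Finset.range n, MeasurableSpace.comap (f i) inferInstance

/-- History σ-algebra `σ(S₀,…,S_t, A₀,…,A_t, R₀,…,R_{t-1})`. -/
def histSA (S : ℕ → Ω → 𝒮) (A : ℕ → Ω → 𝒜) (Rw : ℕ → Ω → ℝ) (t : ℕ) : MeasurableSpace Ω :=
  sigmaUpTo S (t + 1) ⊔ sigmaUpTo A (t + 1) ⊔ sigmaUpTo Rw t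

/-- History σ-algebra `σ(S₀,…,S_t, A₀,…,A_t, R₀,…,R_t)`. -/
def histFull (S : ℕ → Ω → 𝒮) (A : ℕ → Ω → 𝒜) (Rw : ℕ → Ω → ℝ) (t : ℕ) : MeasurableSpace Ω :=
  sigmaUpTo S (t + 1) ⊔ sigmaUpTo A (t + 1) ⊔ sigmaUpTo Rw (t + 1)

/-- History σ-algebra `σ(S₀,…,S_t, A₀,…,A_{t-1}, R₀,…,R_{t-1})`. -/
def histPreA (S : ℕ → Ω → 𝒮) (A : ℕ → Ω → 𝒜) (Rw : ℕ → Ω → ℝ) (t : ℕ) : MeasurableSpace Ω :=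
  sigmaUpTo S (t + 1) ⊔ sigmaUpTo A t ⊔ sigmaUpTo Rw t

/-- The (untruncated) doubly robust estimator for the discounted average reward. -/
def drGamma (πb πe : 𝒮 → 𝒜 → ℝ) (γ : ℝ) (p0 : Measure 𝒮) (qh : 𝒮 → 𝒜 → ℝ) (ωh : 𝒮 → ℝ)
    (T : ℕ) (S : ℕ → Ω → 𝒮) (A : ℕ → Ω → 𝒜) (Rw : ℕ → Ω → ℝ) (ω : Ω) : ℝ :=
  (1 - γ) * (∫ s, ∑ a : 𝒜, πe s a * qh s a ∂p0) +
    (T : ℝ)⁻¹ * ∑ t ∈ Finset.range T,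
      ωh (S t ω) * (πe (S t ω) (A t ω) / πb (S t ω) (A t ω)) *
        (Rw t ω + γ * (∑ a : 𝒜, πe (S (t + 1) ω) a * qh (S (t + 1) ω) a) - qh (S t ω) (A t ω))

/-- The truncated doubly robust (TDR) estimator for the discounted average reward. -/
def tdrGamma (πb πe : 𝒮 → 𝒜 → ℝ) (γ : ℝ) (p0 : Measure 𝒮) (qh : 𝒮 → 𝒜 → ℝ) (ωh : 𝒮 → ℝ)
    (τ : ℕ → ℝ) (T : ℕ) (S : ℕ → Ω → 𝒮) (A : ℕ → Ω → 𝒜) (Rw : ℕ → Ω → ℝ) (ω : Ω) : ℝ :=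
  (1 - γ) * (∫ s, ∑ a : 𝒜, πe s a * qh s a ∂p0) +
    (T : ℝ)⁻¹ * ∑ t ∈ Finset.range T,
      min (ωh (S t ω)) (τ t) * (πe (S t ω) (A t ω) / πb (S t ω) (A t ω)) *
        (Rw t ω + γ * (∑ a : 𝒜, πe (S (t + 1) ω) a * qh (S (t + 1) ω) a) - qh (S t ω) (A t ω))

/-- The self-normalized truncated doubly robust (TDR) estimator for the long-run
average reward. -/
def tdrLong (πb πe : 𝒮 → 𝒜 → ℝ) (Qh : 𝒮 → 𝒜 → ℝ) (ωh : 𝒮 → ℝ) (τ : ℕ → ℝ) (T : ℕ)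
    (S : ℕ → Ω → 𝒮) (A : ℕ → Ω → 𝒜) (Rw : ℕ → Ω → ℝ) (ω : Ω) : ℝ :=
  (∑ t ∈ Finset.range T,
      min (ωh (S t ω)) (τ t) * (πe (S t ω) (A t ω) / πb (S t ω) (A t ω)) *
        (Rw t ω + (∑ a : 𝒜, πe (S (t + 1) ω) a * Qh (S (t + 1) ω) a) - Qh (S t ω) (A t ω))) /
    (∑ t ∈ Finset.range T,
      min (ωh (S t ω)) (τ t) * (πe (S t ω) (A t ω) / πb (S t ω) (A t ω)))

/-- The martingale summands `X_{t,T}` appearing in the CLT analysis of the TDR estimator,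
with truncation `τ_t = t^{α/2}`. -/
def Xtdr (ps : 𝒮 → 𝒜 → Measure 𝒮) (pr : 𝒮 → 𝒜 → Measure ℝ) (πb πe : 𝒮 → 𝒜 → ℝ)
    (γ α : ℝ) (ωγ : 𝒮 → ℝ) (S : ℕ → Ω → 𝒮) (A : ℕ → Ω → 𝒜) (Rw : ℕ → Ω → ℝ)
    (T t : ℕ) (ω : Ω) : ℝ :=
  (Real.sqrt T)⁻¹ * min (ωγ (S t ω)) ((t : ℝ) ^ (α / 2)) *
    (πe (S t ω) (A t ω) / πb (S t ω) (A t ω)) *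
    (Rw t ω + γ * vGamma ps pr πe γ (S (t + 1) ω) - qGamma ps pr πe γ (S t ω) (A t ω))

/-- Asymptotic variance `σ_b²` for discounted off-policy evaluation. -/
def sigmaB2 (ps : 𝒮 → 𝒜 → Measure 𝒮) (pr : 𝒮 → 𝒜 → Measure ℝ) (πb πe : 𝒮 → 𝒜 → ℝ)
    (γ : ℝ) (pb : Measure 𝒮) (ωγ : 𝒮 → ℝ) : ℝ :=
  ∫ v, (ωγ v.1 * (πe v.1 v.2.1 / πb v.1 v.2.1) *
      (v.2.2.1 + γ * vGamma ps pr πe γ v.2.2.2 - qGamma ps pr πe γ v.1 v.2.1)) ^ 2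
    ∂(behTuple ps pr πb pb)

/-- Asymptotic variance `Σ_b²` for long-run average-reward off-policy evaluation. -/
def sigmaB2Long (ps : 𝒮 → 𝒜 → Measure 𝒮) (pr : 𝒮 → 𝒜 → Measure ℝ) (πb πe : 𝒮 → 𝒜 → ℝ)
    (pb : Measure 𝒮) (ωs : 𝒮 → ℝ) (Q : 𝒮 → 𝒜 → ℝ) (θ : ℝ) : ℝ :=
  ∫ v, (ωs v.1 * (πe v.1 v.2.1 / πb v.1 v.2.1) *
      (v.2.2.1 + (∑ a : 𝒜, πe v.2.2.2 a * Q v.2.2.2 a) - Q v.1 v.2.1 - θ)) ^ 2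
    ∂(behTuple ps pr πb pb)

/-- The score `ψ(S_t, A_t, R_t, S_{t+1}; f_ω, f_q)` used in the doubly robust estimator. -/
def psiFun (πb πe : 𝒮 → 𝒜 → ℝ) (γ : ℝ) (p0 : Measure 𝒮) (fq : 𝒮 → 𝒜 → ℝ) (fω : 𝒮 → ℝ)
    (S : ℕ → Ω → 𝒮) (A : ℕ → Ω → 𝒜) (Rw : ℕ → Ω → ℝ) (t : ℕ) (ω : Ω) : ℝ :=
  (1 - γ) * (∫ s, ∑ a : 𝒜, πe s a * fq s a ∂p0) +
    fω (S t ω) * (πe (S t ω) (A t ω) / πb (S t ω) (A t ω)) *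
      (Rw t ω + γ * (∑ a : 𝒜, πe (S (t + 1) ω) a * fq (S (t + 1) ω) a) - fq (S t ω) (A t ω))

/-- Shorthand `c_t = w(S_t) η(S_t, A_t)` (density-ratio times action-probability ratio). -/
def cW (πb πe : 𝒮 → 𝒜 → ℝ) (w : 𝒮 → ℝ) (S : ℕ → Ω → 𝒮) (A : ℕ → Ω → 𝒜) (t : ℕ) (ω : Ω) : ℝ :=
  w (S t ω) * (πe (S t ω) (A t ω) / πb (S t ω) (A t ω))

/-- Shorthand `b_t = R_t + V(S_{t+1}) - Q(S_t, A_t) - θ`. -/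
def bQ (πe : 𝒮 → 𝒜 → ℝ) (Q : 𝒮 → 𝒜 → ℝ) (θ : ℝ) (S : ℕ → Ω → 𝒮) (A : ℕ → Ω → 𝒜)
    (Rw : ℕ → Ω → ℝ) (t : ℕ) (ω : Ω) : ℝ :=
  Rw t ω + (∑ a : 𝒜, πe (S (t + 1) ω) a * Q (S (t + 1) ω) a) - Q (S t ω) (A t ω) - θ

/-! The evaluation chain started from `p_b` cannot outgrow `p_b` by more than a factor
`e^{ζ t}` after `t` steps (policy overlap), while it is within `e^{-t/t₀}` of `p_e` in total
variation (mixing). On `B = {ω ≥ y}` this gives `y p_b(B) ≤ p_e(B) ≤ e^{ζ t} p_b(B) + e^{-t/t₀}`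
for every `t`; taking `e^{ζ t} ≈ y/2` yields `p_b(B) ≲ (2/y)^{1 + 1/(ζ t₀)}`. -/

section MarkovChain

variable {X : Type*} [MeasurableSpace X]

@[simp]
lemma nstep_zero (k : X → Measure X) (μ : Measure X) : nstep k 0 μ = μ := rfl

lemma nstep_succ (k : X → Measure X) (t : ℕ) (μ : Measure X) :
    nstep k (t + 1) μ = (nstep k t μ).bind k :=
  Function.iterate_succ_apply' _ _ _

lemma bind_le_smul_bind {k k' : X → Measure X} (hk : Measurable k)
    (hk' : Measurable k') {μ ν : Measure X} (hμν : μ ≤ ν) {c : ℝ≥0∞} (hkk' : ∀ x, k x ≤ c • k' x) :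
    μ.bind k ≤ c • ν.bind k' := by
  refine Measure.le_iff.2 fun B hB => ?_
  rw [Measure.smul_apply, Measure.bind_apply hB hk.aemeasurable,
    Measure.bind_apply hB hk'.aemeasurable, smul_eq_mul,
    ← lintegral_const_mul (f := fun x => k' x B) c ((Measure.measurable_coe hB).comp hk')]
  exact lintegral_mono' hμν fun x => hkk' x B

lemma isProbabilityMeasure_nstep {k : X → Measure X} (hk : Measurable k)
    (hk1 : ∀ x, IsProbabilityMeasure (k x)) {μ : Measure X} [IsProbabilityMeasure μ] (t : ℕ) :
    IsProbabilityMeasure (nstep k t μ) := by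
  induction t with
  | zero => assumption
  | succ t ih =>
    constructor
    rw [nstep_succ, Measure.bind_apply .univ hk.aemeasurable]
    simp

lemma nstep_le_pow_smul {k k' : X → Measure X} (hk : Measurable k) (hk' : Measurable k')
    {c : ℝ≥0∞} (hkk' : ∀ x, k x ≤ c • k' x) {μ : Measure X} (hμ : μ.bind k' = μ) (t : ℕ) :
    nstep k t μ ≤ c ^ t • μ := by
  induction t with
  | zero => simp
  | succ t ih =>
    calc nstep k (t + 1) μ = (nstep k t μ).bind k := nstep_succ k t μ
      _ ≤ c • (c ^ t • μ).bind k' := bind_le_smul_bind hk hk' ih hkk'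
      _ = c ^ (t + 1) • μ := by rw [Measure.bind_smul, hμ, smul_smul, pow_succ']

lemma abs_measureReal_sub_le_one (μ ν : Measure X) [IsProbabilityMeasure μ]
    [IsProbabilityMeasure ν] (B : Set X) : |μ.real B - ν.real B| ≤ 1 :=
  abs_sub_le_of_nonneg_of_le measureReal_nonneg measureReal_le_one measureReal_nonneg
    measureReal_le_one

lemma tvDist_le_one (μ ν : Measure X) [IsProbabilityMeasure μ] [IsProbabilityMeasure ν] :
    tvDist μ ν ≤ 1 :=
  ciSup_le fun B => abs_measureReal_sub_le_one μ ν B.1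

lemma abs_measureReal_sub_le_tvDist (μ ν : Measure X) [IsProbabilityMeasure μ]
    [IsProbabilityMeasure ν] {B : Set X} (hB : MeasurableSet B) :
    |μ.real B - ν.real B| ≤ tvDist μ ν :=
  le_ciSup (f := fun B : {B : Set X // MeasurableSet B} => |μ.real B.1 - ν.real B.1|)
    ⟨1, Set.forall_mem_range.2 fun B => abs_measureReal_sub_le_one μ ν B.1⟩ ⟨B, hB⟩

lemma tvDist_nstep_le_pow {k : X → Measure X} (hk : Measurable k)
    (hk1 : ∀ x, IsProbabilityMeasure (k x)) {r : ℝ} (hr : 0 ≤ r)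
    (hcontr : ∀ f1 f2 : Measure X, IsProbabilityMeasure f1 → IsProbabilityMeasure f2 →
      tvDist (f1.bind k) (f2.bind k) ≤ r * tvDist f1 f2)
    (μ : Measure X) {ν : Measure X} [IsProbabilityMeasure μ] [IsProbabilityMeasure ν]
    (hν : ν.bind k = ν) (t : ℕ) : tvDist (nstep k t μ) ν ≤ r ^ t := by
  induction t with
  | zero => simpa using tvDist_le_one μ ν
  | succ t ih =>
    have := isProbabilityMeasure_nstep hk hk1 (μ := μ) t
    calc tvDist (nstep k (t + 1) μ) ν = tvDist ((nstep k t μ).bind k) (ν.bind k) := by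
          rw [nstep_succ, hν]
      _ ≤ r * tvDist (nstep k t μ) ν := hcontr _ _ this ‹_›
      _ ≤ r * r ^ t := mul_le_mul_of_nonneg_left ih hr
      _ = r ^ (t + 1) := (pow_succ' r t).symm

lemma measureReal_le_pow_mul_add_pow {k k' : X → Measure X} (hk : Measurable k)
    (hk1 : ∀ x, IsProbabilityMeasure (k x)) (hk' : Measurable k') {c r : ℝ} (hc : 0 ≤ c)
    (hr : 0 ≤ r) (hkk' : ∀ x, k x ≤ ENNReal.ofReal c • k' x)
    (hcontr : ∀ f1 f2 : Measure X, IsProbabilityMeasure f1 → IsProbabilityMeasure f2 →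
      tvDist (f1.bind k) (f2.bind k) ≤ r * tvDist f1 f2)
    {μ ν : Measure X} [IsProbabilityMeasure μ] [IsProbabilityMeasure ν] (hμ : μ.bind k' = μ)
    (hν : ν.bind k = ν) {B : Set X} (hB : MeasurableSet B) (t : ℕ) :
    ν.real B ≤ c ^ t * μ.real B + r ^ t := by
  have := isProbabilityMeasure_nstep hk hk1 (μ := μ) t
  have hdom : (nstep k t μ).real B ≤ c ^ t * μ.real B := by
    have := nstep_le_pow_smul hk hk' hkk' hμ t B
    rw [Measure.smul_apply, smul_eq_mul, ← ENNReal.ofReal_pow hc] at this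
    simpa [measureReal_def, ENNReal.toReal_mul, hc] using
      ENNReal.toReal_mono (by finiteness) this
  have hmix : |(nstep k t μ).real B - ν.real B| ≤ r ^ t :=
    (abs_measureReal_sub_le_tvDist _ _ hB).trans (tvDist_nstep_le_pow hk hk1 hr hcontr μ hν t)
  linarith [neg_abs_le ((nstep k t μ).real B - ν.real B)]

lemma mul_measureReal_le_of_forall_le {μ ν : Measure X} [IsFiniteMeasure ν] {w : X → ℝ}
    (hdens : ∀ B, MeasurableSet B → ν B = ∫⁻ x in B, ENNReal.ofReal (w x) ∂μ) {B : Set X}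
    (hB : MeasurableSet B) {y : ℝ} (hy : 0 ≤ y) (hwB : ∀ x ∈ B, y ≤ w x) :
    y * μ.real B ≤ ν.real B := by
  have h : ENNReal.ofReal y * μ B ≤ ν B := by
    rw [hdens B hB, ← setLIntegral_const]
    exact setLIntegral_mono' hB fun x hx => ENNReal.ofReal_le_ofReal (hwB x hx)
  simpa [measureReal_def, ENNReal.toReal_mul, hy] using ENNReal.toReal_mono (by finiteness) h

end MarkovChain

omit [MeasurableSpace 𝒜] in
lemma stepS_apply (ps : 𝒮 → 𝒜 → Measure 𝒮) (π : 𝒮 → 𝒜 → ℝ) (s : 𝒮) (B : Set 𝒮) :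
    stepS ps π s B = ∑ a : 𝒜, ENNReal.ofReal (π s a) * ps s a B := by
  simp [stepS, Measure.finsetSum_apply]

lemma measurable_stepS {ps : 𝒮 → 𝒜 → Measure 𝒮} (hps : Measurable fun p : 𝒮 × 𝒜 => ps p.1 p.2)
    {π : 𝒮 → 𝒜 → ℝ} (hπ : ∀ a, Measurable fun s => π s a) : Measurable (stepS ps π) := by
  refine Measure.measurable_of_measurable_coe _ fun B hB => ?_
  simp only [stepS_apply]
  refine Finset.measurable_sum _ fun a _ => (hπ a).ennreal_ofReal.mul ?_
  exact (Measure.measurable_coe hB).comp (hps.comp (measurable_id.prodMk measurable_const))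

omit [MeasurableSpace 𝒜] in
lemma isProbabilityMeasure_stepS {ps : 𝒮 → 𝒜 → Measure 𝒮}
    (hps : ∀ s a, IsProbabilityMeasure (ps s a)) {π : 𝒮 → 𝒜 → ℝ} (hπ0 : ∀ s a, 0 ≤ π s a)
    (hπ1 : ∀ s, ∑ a : 𝒜, π s a = 1) (s : 𝒮) : IsProbabilityMeasure (stepS ps π s) := by
  constructor
  simp only [stepS_apply, measure_univ, mul_one]
  rw [← ENNReal.ofReal_sum_of_nonneg fun a _ => hπ0 s a, hπ1 s, ENNReal.ofReal_one]

omit [MeasurableSpace 𝒜] in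
lemma stepS_le_smul_stepS (ps : 𝒮 → 𝒜 → Measure 𝒮) {πb πe : 𝒮 → 𝒜 → ℝ} {c : ℝ} (hc : 0 ≤ c)
    (hC : ∀ s a, πe s a ≤ c * πb s a) (s : 𝒮) :
    stepS ps πe s ≤ ENNReal.ofReal c • stepS ps πb s := by
  refine Measure.le_iff.2 fun B _ => ?_
  rw [Measure.smul_apply, smul_eq_mul, stepS_apply, stepS_apply, Finset.mul_sum]
  refine Finset.sum_le_sum fun a _ => ?_
  rw [← mul_assoc, ← ENNReal.ofReal_mul hc]
  exact mul_le_mul_left (ENNReal.ofReal_le_ofReal (hC s a)) _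

lemma exists_nat_exp_pow_le_and_exp_neg_pow_le {ζ t0 z : ℝ} (hζ : 0 < ζ) (ht0 : 0 < t0)
    (hz : 1 ≤ z) : ∃ t : ℕ, Real.exp ζ ^ t ≤ z ∧
      Real.exp (-(1 / t0)) ^ t ≤ Real.exp (1 / t0) * z⁻¹ ^ (1 / (ζ * t0)) := by
  have hz0 : 0 < z := zero_lt_one.trans_le hz
  refine ⟨⌊Real.log z / ζ⌋₊, ?_, ?_⟩
  · rw [← Real.exp_nat_mul, ← Real.le_log_iff_exp_le hz0, ← le_div_iff₀ hζ]
    exact Nat.floor_le (div_nonneg (Real.log_nonneg hz) hζ.le)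
  · have ht : Real.log z / ζ < ⌊Real.log z / ζ⌋₊ + 1 := Nat.lt_floor_add_one _
    rw [← Real.exp_nat_mul, Real.rpow_def_of_pos (inv_pos.2 hz0), Real.log_inv, ← Real.exp_add,
      Real.exp_le_exp]
    have : Real.log z / ζ / t0 < (⌊Real.log z / ζ⌋₊ + 1) / t0 := div_lt_div_of_pos_right ht ht0
    field_simp at this ⊢
    linarith

lemma le_exp_mul_rpow_of_forall_mul_le {ζ t0 y b : ℝ} (hζ : 0 < ζ) (ht0 : 0 < t0) (hy : 0 < y)
    (hb0 : 0 ≤ b) (hb1 : b ≤ 1)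
    (h : ∀ t : ℕ, y * b ≤ Real.exp ζ ^ t * b + Real.exp (-(1 / t0)) ^ t) :
    b ≤ Real.exp (1 / t0) * (2 / y) ^ (1 + 1 / (ζ * t0)) := by
  rcases le_or_gt y 2 with hy2 | hy2
  · calc b ≤ 1 := hb1
      _ ≤ Real.exp (1 / t0) * (2 / y) ^ (1 + 1 / (ζ * t0)) :=
        one_le_mul_of_one_le_of_one_le (Real.one_le_exp (by positivity))
          (Real.one_le_rpow ((one_le_div hy).2 hy2) (by positivity))
  obtain ⟨t, hgrow, hdecay⟩ :=
    exists_nat_exp_pow_le_and_exp_neg_pow_le hζ ht0 (z := y / 2) (by linarith)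
  have hhalf : y / 2 * b ≤ Real.exp (1 / t0) * (2 / y) ^ (1 / (ζ * t0)) := by
    have := mul_le_mul_of_nonneg_right hgrow hb0
    rw [inv_div] at hdecay
    linarith [h t]
  rw [Real.rpow_add (by positivity), Real.rpow_one]
  calc b = 2 / y * (y / 2 * b) := by field_simp
    _ ≤ 2 / y * (Real.exp (1 / t0) * (2 / y) ^ (1 / (ζ * t0))) := by gcongr
    _ = _ := by ring

theorem mixing_implies_weak_overlap_general
    {𝒮 : Type*} [MeasurableSpace 𝒮] {𝒜 : Type*} [Fintype 𝒜] [MeasurableSpace 𝒜]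
    (ps : 𝒮 → 𝒜 → Measure 𝒮)
    (hps : ∀ s a, IsProbabilityMeasure (ps s a))
    (hpsm : Measurable fun p : 𝒮 × 𝒜 => ps p.1 p.2)
    (πb πe : 𝒮 → 𝒜 → ℝ)
    (hπbm : ∀ a, Measurable fun s => πb s a)
    (hπe0 : ∀ s a, 0 ≤ πe s a) (hπe1 : ∀ s, ∑ a : 𝒜, πe s a = 1)
    (hπem : ∀ a, Measurable fun s => πe s a)
    (ζπ : ℝ) (hζπ : 0 < ζπ) (hCη : ∀ s a, πe s a ≤ Real.exp ζπ * πb s a)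
    (pb : Measure 𝒮) (hpb : IsProbabilityMeasure pb)
    (hpbInv : pb.bind (stepS ps πb) = pb)
    (t0 : ℝ) (ht0 : 0 < t0)
    (hgeoE : ∀ f1 f2 : Measure 𝒮, IsProbabilityMeasure f1 → IsProbabilityMeasure f2 →
      tvDist (f1.bind (stepS ps πe)) (f2.bind (stepS ps πe)) ≤
        Real.exp (-(1 / t0)) * tvDist f1 f2)
    (pe : Measure 𝒮) (hpe : IsProbabilityMeasure pe)
    (hpeInv : pe.bind (stepS ps πe) = pe)
    (ωs : 𝒮 → ℝ) (hωsm : Measurable ωs) (hωs0 : ∀ s, 0 ≤ ωs s)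
    (hωsdens : ∀ B : Set 𝒮, MeasurableSet B → pe B = ∫⁻ s in B, ENNReal.ofReal (ωs s) ∂pb)
    :
    ∃ C : ℝ, 0 < C ∧ ∀ x : ℝ, 0 < x →
      (pb {s | x ≤ ωs s ^ (1 + 1 / (ζπ * t0))}).toReal ≤ C / x := by
  set p : ℝ := 1 + 1 / (ζπ * t0)
  have hp : 0 < p := by positivity
  have hkE := measurable_stepS hpsm hπem
  have hkE1 := isProbabilityMeasure_stepS hps hπe0 hπe1
  have hkB := measurable_stepS hpsm hπbm
  refine ⟨2 ^ p * Real.exp (1 / t0), by positivity, fun x hx => ?_⟩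
  set y := x ^ p⁻¹
  have hy : 0 < y := by positivity
  set B := {s | y ≤ ωs s}
  have hset : {s | x ≤ ωs s ^ p} = B :=
    Set.ext fun s => (Real.rpow_inv_le_iff_of_pos hx.le (hωs0 s) hp).symm
  have hB : MeasurableSet B := measurableSet_le measurable_const hωsm
  have htradeoff (t : ℕ) :
      y * pb.real B ≤ Real.exp ζπ ^ t * pb.real B + Real.exp (-(1 / t0)) ^ t :=
    (mul_measureReal_le_of_forall_le hωsdens hB hy.le fun _ hs => hs).trans <|
      measureReal_le_pow_mul_add_pow hkE hkE1 hkB (Real.exp_nonneg _) (Real.exp_nonneg _)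
        (stepS_le_smul_stepS ps (Real.exp_nonneg _) hCη) hgeoE hpbInv hpeInv hB t
  calc (pb {s | x ≤ ωs s ^ p}).toReal = pb.real B := by rw [hset]; rfl
    _ ≤ Real.exp (1 / t0) * (2 / y) ^ p :=
      le_exp_mul_rpow_of_forall_mul_le hζπ ht0 hy measureReal_nonneg measureReal_le_one htradeoff
    _ = 2 ^ p * Real.exp (1 / t0) / x := by
      rw [Real.div_rpow zero_le_two hy.le, Real.rpow_inv_rpow hx.le hp.ne']
      ring

/-- Theorem 5: mixing-implied distributional overlap. For an MDP satisfying
time-invariance, random exploration and stationarity, if geometric mixing holds with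
parameter `t₀` for the state kernels of both policies and policy overlap holds with
`C_η = exp(ζ_π)`, then long-run δ-weak distributional overlap holds with `δ = 1/(ζ_π t₀)`. -/
theorem mixing_implies_weak_overlap
    {𝒮 : Type*} [MeasurableSpace 𝒮] {𝒜 : Type*} [Fintype 𝒜] [MeasurableSpace 𝒜]
    {Ω : Type*} [MeasurableSpace Ω]
    (ps : 𝒮 → 𝒜 → Measure 𝒮) (pr : 𝒮 → 𝒜 → Measure ℝ) (Rmax : ℝ)
    (hps : ∀ s a, IsProbabilityMeasure (ps s a))
    (hpsm : Measurable fun p : 𝒮 × 𝒜 => ps p.1 p.2)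
    (hpr : ∀ s a, IsProbabilityMeasure (pr s a))
    (hprm : Measurable fun p : 𝒮 × 𝒜 => pr p.1 p.2)
    (hRmax : 0 ≤ Rmax) (hRbd : ∀ s a, ∀ᵐ r ∂(pr s a), |r| ≤ Rmax)
    (πb πe : 𝒮 → 𝒜 → ℝ)
    (hπb0 : ∀ s a, 0 < πb s a) (hπb1 : ∀ s, ∑ a : 𝒜, πb s a = 1)
    (hπbm : ∀ a, Measurable fun s => πb s a)
    (hπe0 : ∀ s a, 0 ≤ πe s a) (hπe1 : ∀ s, ∑ a : 𝒜, πe s a = 1)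
    (hπem : ∀ a, Measurable fun s => πe s a)
    (ζπ : ℝ) (hζπ : 0 < ζπ) (hCη : ∀ s a, πe s a ≤ Real.exp ζπ * πb s a)
    (pb : Measure 𝒮) (hpb : IsProbabilityMeasure pb)
    (hpbInv : pb.bind (stepS ps πb) = pb)
    (μ : Measure Ω) (hμprob : IsProbabilityMeasure μ)
    (S : ℕ → Ω → 𝒮) (A : ℕ → Ω → 𝒜) (Rw : ℕ → Ω → ℝ)
    (hSm : ∀ t, Measurable (S t)) (hAm : ∀ t, Measurable (A t))
    (hRwm : ∀ t, Measurable (Rw t))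
    (hinit : μ.map (S 0) = pb)
    (hdynR : ∀ (t : ℕ) (f : ℝ → ℝ), Measurable f → (∃ B, ∀ x, |f x| ≤ B) →
      μ[(fun ω => f (Rw t ω)) | histSA S A Rw t]
        =ᵐ[μ] fun ω => ∫ r, f r ∂(pr (S t ω) (A t ω)))
    (hdynS : ∀ (t : ℕ) (f : 𝒮 → ℝ), Measurable f → (∃ B, ∀ x, |f x| ≤ B) →
      μ[(fun ω => f (S (t + 1) ω)) | histFull S A Rw t]
        =ᵐ[μ] fun ω => ∫ s', f s' ∂(ps (S t ω) (A t ω)))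
    (hdynA : ∀ (t : ℕ) (g : 𝒜 → ℝ),
      μ[(fun ω => g (A t ω)) | histPreA S A Rw t]
        =ᵐ[μ] fun ω => ∑ a : 𝒜, πb (S t ω) a * g a)
    (t0 : ℝ) (ht0 : 0 < t0)
    (hgeoB : ∀ f1 f2 : Measure 𝒮, IsProbabilityMeasure f1 → IsProbabilityMeasure f2 →
      tvDist (f1.bind (stepS ps πb)) (f2.bind (stepS ps πb)) ≤
        Real.exp (-(1 / t0)) * tvDist f1 f2)
    (hgeoE : ∀ f1 f2 : Measure 𝒮, IsProbabilityMeasure f1 → IsProbabilityMeasure f2 →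
      tvDist (f1.bind (stepS ps πe)) (f2.bind (stepS ps πe)) ≤
        Real.exp (-(1 / t0)) * tvDist f1 f2)
    (pe : Measure 𝒮) (hpe : IsProbabilityMeasure pe)
    (hpeInv : pe.bind (stepS ps πe) = pe)
    (ωs : 𝒮 → ℝ) (hωsm : Measurable ωs) (hωs0 : ∀ s, 0 ≤ ωs s)
    (hωsdens : ∀ B : Set 𝒮, MeasurableSet B → pe B = ∫⁻ s in B, ENNReal.ofReal (ωs s) ∂pb)
    :
    ∃ C : ℝ, 0 < C ∧ ∀ x : ℝ, 0 < x →
      (pb {s | x ≤ ωs s ^ (1 + 1 / (ζπ * t0))}).toReal ≤ C / x :=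
  mixing_implies_weak_overlap_general ps hps hpsm πb πe hπbm hπe0 hπe1 hπem ζπ hζπ hCη pb hpb hpbInv
    t0 ht0 hgeoE pe hpe hpeInv ωs hωsm hωs0 hωsdens
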